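/- arXiv:1207.5965 — 3 statements merged into one kernel-verified Lean document; each statement's English description precedes it below -/
import Mathlib

section
/- For a regular plane curve c and a variation h, the first variation of the unit tangent vector v = c'/|c'| is given by D_{c,h} v = ⟨D_s h, n⟩ n, where D_s h = h'/|c'| is the arc-length derivative and n is the unit normal obtained by rotating v by π/2. -/
open Real MeasureTheory intervalIntegral Function
open scoped RealInnerProductSpace

noncomputable section

abbrev E2 := EuclideanSpace ℝ (Fin 2)
abbrev E3 := EuclideanSpace ℝ (Fin 3)

def V2 (x y : ℝ) : E2 := (WithLp.equiv 2 (Fin 2 → ℝ)).symm ![x, y]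
def V3 (x y z : ℝ) : E3 := (WithLp.equiv 2 (Fin 3 → ℝ)).symm ![x, y, z]

/-- Rotation by `π/2` in the plane. -/
def rot (x : E2) : E2 := V2 (-(x 1)) (x 0)

/-- Unit tangent vector `v = c'/|c'|` of a plane curve. -/
def uT (c : ℝ → E2) (θ : ℝ) : E2 := ‖deriv c θ‖⁻¹ • deriv c θ

/-- Unit normal vector `n`, the rotation of `v` by `π/2`. -/
def nor (c : ℝ → E2) (θ : ℝ) : E2 := rot (uT c θ)

/-- Arc-length derivative `D_s h = h'/|c'|` along the curve `c`. -/
def Ds (c : ℝ → E2) (h : ℝ → E2) (θ : ℝ) : E2 := ‖deriv c θ‖⁻¹ • deriv h θ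

/-- Curvature `κ = ⟨D_s v, n⟩` of a plane curve. -/
def curvK (c : ℝ → E2) (θ : ℝ) : ℝ :=
  ⟪(‖deriv c θ‖⁻¹ • deriv (uT c) θ : E2), nor c θ⟫

lemma rot_smul (s : ℝ) (x : E2) : rot (s • x) = s • rot x := by
  unfold rot V2
  ext i
  fin_cases i <;> simp [mul_comm]

lemma rot_key (a b : E2) : ⟪b, rot a⟫ • rot a = (‖a‖ ^ 2) • b - ⟪a, b⟫ • a := by
  have hn : ‖a‖ ^ 2 = a 0 * a 0 + a 1 * a 1 := by
    simp only [EuclideanSpace.norm_eq, Real.norm_eq_abs, sq_abs, Fin.sum_univ_two]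
    rw [Real.sq_sqrt (by positivity)]
    ring
  ext i
  fin_cases i <;>
    simp [rot, V2, PiLp.inner_apply, Fin.sum_univ_two, hn] <;> ring

/-- Variation of the unit tangent vector: `D_{c,h} v = ⟨D_s h, n⟩ n`. -/
theorem variation_unit_tangent (c h : ℝ → E2)
    (hc : ContDiff ℝ (⊤ : ℕ∞) c) (hh : ContDiff ℝ (⊤ : ℕ∞) h)
    (himm : ∀ θ, deriv c θ ≠ 0) (θ : ℝ) :
    HasDerivAt (fun t : ℝ => uT (fun s => c s + t • h s) θ)
      (⟪Ds c h θ, nor c θ⟫ • nor c θ) 0 := by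
  set a := deriv c θ with ha
  set b := deriv h θ with hb
  have ha0 : a ≠ 0 := himm θ
  have hr0 : ‖a‖ ≠ 0 := norm_ne_zero_iff.2 ha0
  set r := ‖a‖ with hr
  -- rewrite the function
  have hfun : (fun t : ℝ => uT (fun s => c s + t • h s) θ)
      = fun t : ℝ => ‖a + t • b‖⁻¹ • (a + t • b) := by
    funext t
    have hd : deriv (fun s => c s + t • h s) θ = a + t • b := by
      rw [deriv_fun_add (g := fun s => t • h s) (hc.differentiable (by simp) θ)
        ((hh.differentiable (by simp) θ).const_smul t : DifferentiableAt ℝ (fun s => t • h s) θ),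
        deriv_fun_const_smul t (hh.differentiable (by simp) θ)]
    simp only [uT, hd]
  rw [hfun]
  -- derivative of u t = a + t • b
  have hu : HasDerivAt (fun t : ℝ => a + t • b) b 0 := by
    simpa using (hasDerivAt_const (0 : ℝ) a).fun_add ((hasDerivAt_id (0 : ℝ)).smul_const b)
  have hu0 : (fun t : ℝ => a + t • b) 0 = a := by simp
  -- derivative of ‖u t‖² then ‖u t‖
  have hsq : HasDerivAt (fun t : ℝ => ‖a + t • b‖ ^ 2) (2 * ⟪a, b⟫) 0 := by
    simpa using hu.norm_sq
  have hsq0 : ‖a‖ ^ 2 ≠ 0 := pow_ne_zero 2 hr0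
  have hnrm : HasDerivAt (fun t : ℝ => ‖a + t • b‖) (⟪a, b⟫ / r) 0 := by
    have := hsq.sqrt (by simpa using hsq0)
    have heq : (fun t : ℝ => √(‖a + t • b‖ ^ 2)) = fun t : ℝ => ‖a + t • b‖ := by
      funext t; exact Real.sqrt_sq (norm_nonneg _)
    rw [heq] at this
    convert this using 1
    simp only [hu0]
    rw [Real.sqrt_sq (norm_nonneg a)]
    field_simp
    ring
  have hinv : HasDerivAt (fun t : ℝ => ‖a + t • b‖⁻¹) (-(⟪a, b⟫ / r) / r ^ 2) 0 := by
    have := hnrm.fun_inv (by simp only [zero_smul, add_zero]; exact hr0)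
    simpa using this
  have hmain := hinv.fun_smul hu
  simp only [hu0] at hmain
  convert hmain using 1
  · rfl
  · rfl
  · rfl
  -- now the algebraic identity
  have hDs : Ds c h θ = r⁻¹ • b := rfl
  have hnor : nor c θ = r⁻¹ • rot a := by
    simp only [nor, uT, ← ha, ← hr, rot_smul]
  rw [hDs, hnor, real_inner_smul_left, real_inner_smul_right, smul_smul]
  have e1 : r⁻¹ * (r⁻¹ * ⟪b, rot a⟫) * r⁻¹ = r⁻¹ * r⁻¹ * r⁻¹ * ⟪b, rot a⟫ := by ring
  rw [e1, ← smul_smul, rot_key, smul_sub, smul_smul, smul_smul]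
  have h1 : r⁻¹ * r⁻¹ * r⁻¹ * ‖a‖ ^ 2 = ‖a‖⁻¹ := by
    rw [← hr]; field_simp
  have h2 : r⁻¹ * r⁻¹ * r⁻¹ * ⟪a, b⟫ = -(-(⟪a, b⟫ / r) / r ^ 2) := by
    field_simp
  rw [h1, h2]
  module
end
end

section
/- The derivative of the Q-transform is infinitesimally injective: if c : S¹ → ℝ² is a smooth immersion and h a smooth vector field along c satisfying ⟨h', c'⟩ c + 2|c'|² h = 0 identically on S¹, then h ≡ 0. -/
open Real MeasureTheory intervalIntegral Function
open scoped RealInnerProductSpace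

noncomputable section

/-- Scalar endgame lemma. -/
private lemma Qtransform_scalar_zero (f r q : ℝ → ℝ)
    (hfd : Differentiable ℝ f) (hrd : Differentiable ℝ r)
    (hrc' : Continuous (deriv r))
    (hfper : Function.Periodic f (2 * π)) (hrper : Function.Periodic r (2 * π))
    (hqpos : ∀ θ, 0 < q θ)
    (hrpos : ∀ θ, f θ ≠ 0 → 0 < r θ)
    (hK : ∀ θ, r θ * deriv r θ * deriv f θ = f θ * ((deriv r θ) ^ 2 - 6 * q θ * r θ))
    (hCS : ∀ θ, (deriv r θ) ^ 2 ≤ 4 * r θ * q θ) :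
    ∀ θ, f θ = 0 := by
  have h2π : (0:ℝ) < 2 * π := by positivity
  -- if f θ ≠ 0 then deriv r θ ≠ 0
  have claim1 : ∀ θ, f θ ≠ 0 → deriv r θ ≠ 0 := by
    intro θ hf0 hr0
    have hk := hK θ
    rw [hr0] at hk
    have h6 : f θ * (q θ * r θ) = 0 := by linarith [hk]
    rcases mul_eq_zero.1 h6 with h | h
    · exact hf0 h
    · nlinarith [hqpos θ, hrpos θ hf0]
  -- a zero of f exists, at a maximum point of r
  obtain ⟨θm, hθm_mem, hθm⟩ := isCompact_Icc.exists_isMaxOn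
    (Set.nonempty_Icc.2 (by linarith : (0:ℝ) ≤ 2 * π))
    (hrd.continuous.continuousOn (s := Set.Icc 0 (2*π)))
  have hmax : ∀ x, r x ≤ r θm := by
    intro x
    obtain ⟨y, hy, hxy⟩ := hrper.exists_mem_Ico₀ h2π x
    rw [hxy]
    exact hθm ⟨hy.1, hy.2.le⟩
  have hderiv0 : deriv r θm = 0 := by
    have hloc : IsLocalMax r θm := by
      have : IsMaxOn r Set.univ θm := fun x _ => hmax x
      exact this.isLocalMax Filter.univ_mem
    exact hloc.deriv_eq_zero
  have hfθm : f θm = 0 := by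
    by_contra hne
    exact claim1 θm hne hderiv0
  have hzero : ∀ n : ℤ, f (θm + n * (2 * π)) = 0 := by
    intro n
    rw [(hfper.int_mul n) θm]
    exact hfθm
  -- main argument
  intro θ₀
  by_contra hf0
  have hr0 := claim1 θ₀ hf0
  -- μ = f² r
  set μ : ℝ → ℝ := fun x => f x ^ 2 * r x with hμ_def
  have hμD : ∀ x, HasDerivAt μ (2 * f x ^ 1 * deriv f x * r x + f x ^ 2 * deriv r x) x := by
    intro x
    exact (((hfd x).hasDerivAt.pow 2).mul (hrd x).hasDerivAt)
  have hμcont : Continuous μ := (hfd.continuous.pow 2).mul hrd.continuous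
  have hμnonneg : ∀ x, f x ≠ 0 → 0 < μ x := by
    intro x hx
    have h1 : 0 < f x ^ 2 := (sq_nonneg _).lt_of_ne (Ne.symm (pow_ne_zero 2 hx))
    exact mul_pos h1 (hrpos x hx)
  -- μ' r' ≤ 0 everywhere
  have hμr' : ∀ x, (2 * f x ^ 1 * deriv f x * r x + f x ^ 2 * deriv r x) * deriv r x ≤ 0 := by
    intro x
    have e1 : (2 * f x ^ 1 * deriv f x * r x + f x ^ 2 * deriv r x) * deriv r x
        = 3 * f x ^ 2 * ((deriv r x) ^ 2 - 4 * q x * r x) + (2 * f x) * (r x * deriv r x * deriv f x - f x * ((deriv r x) ^ 2 - 6 * q x * r x)) := by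
      ring
    rw [e1, hK x, sub_self, mul_zero, add_zero]
    nlinarith [hCS x, sq_nonneg (f x)]
  rcases hr0.lt_or_gt with hneg | hpos
  · -- deriv r θ₀ < 0 : find zero to the right, μ nondecreasing on [θ₀, b]
    obtain ⟨n, hn⟩ : ∃ n : ℤ, θ₀ ≤ θm + n * (2 * π) := by
      obtain ⟨n, hn⟩ := exists_int_gt ((θ₀ - θm) / (2 * π))
      refine ⟨n, ?_⟩
      have := (div_lt_iff₀ h2π).1 hn
      linarith
    set z := θm + n * (2 * π) with hz_def
    have hz : f z = 0 := hzero n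
    set S : Set ℝ := Set.Icc θ₀ z ∩ f ⁻¹' {0} with hS_def
    have hSc : IsClosed S := isClosed_Icc.inter (isClosed_singleton.preimage hfd.continuous)
    have hSne : S.Nonempty := ⟨z, ⟨hn, le_rfl⟩, hz⟩
    have hSbdd : BddBelow S := bddBelow_Icc.mono Set.inter_subset_left
    set b := sInf S with hb_def
    have hbS : b ∈ S := hSc.csInf_mem hSne hSbdd
    have hfb : f b = 0 := hbS.2
    have hθb : θ₀ ≤ b := hbS.1.1
    have hne2 : ∀ x, θ₀ ≤ x → x < b → f x ≠ 0 := by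
      intro x h1 h2 hx
      exact absurd (csInf_le hSbdd ⟨⟨h1, h2.le.trans hbS.1.2⟩, hx⟩) (not_le.2 h2)
    have hr'neg : ∀ x, θ₀ ≤ x → x < b → deriv r x < 0 := by
      intro x h1 h2
      rcases (claim1 x (hne2 x h1 h2)).lt_or_gt with hlt | hgt
      · exact hlt
      · exfalso
        have hmem : (0:ℝ) ∈ Set.Icc (deriv r θ₀) (deriv r x) := ⟨hneg.le, hgt.le⟩
        obtain ⟨y, hy, hy0⟩ := intermediate_value_Icc h1 hrc'.continuousOn hmem
        exact claim1 y (hne2 y hy.1 (lt_of_le_of_lt hy.2 h2)) hy0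
    have hmono : MonotoneOn μ (Set.Icc θ₀ b) := by
      apply monotoneOn_of_deriv_nonneg (convex_Icc θ₀ b) hμcont.continuousOn
      · intro x _
        exact (hμD x).differentiableAt.differentiableWithinAt
      · intro x hx
        rw [interior_Icc] at hx
        rw [(hμD x).deriv]
        have h1 := hμr' x
        have h2 := hr'neg x hx.1.le hx.2
        nlinarith
    have hle : μ θ₀ ≤ μ b := hmono ⟨le_rfl, hθb⟩ ⟨hθb, le_rfl⟩ hθb
    have hμb : μ b = 0 := by simp [hμ_def, hfb]
    have := hμnonneg θ₀ hf0
    linarith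
  · -- 0 < deriv r θ₀ : find zero to the left, μ nonincreasing on [a, θ₀]
    obtain ⟨n, hn⟩ : ∃ n : ℤ, θm + n * (2 * π) ≤ θ₀ := by
      obtain ⟨n, hn⟩ := exists_int_lt ((θ₀ - θm) / (2 * π))
      refine ⟨n, ?_⟩
      have := (lt_div_iff₀ h2π).1 hn
      linarith
    set z := θm + n * (2 * π) with hz_def
    have hz : f z = 0 := hzero n
    set S : Set ℝ := Set.Icc z θ₀ ∩ f ⁻¹' {0} with hS_def
    have hSc : IsClosed S := isClosed_Icc.inter (isClosed_singleton.preimage hfd.continuous)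
    have hSne : S.Nonempty := ⟨z, ⟨le_rfl, hn⟩, hz⟩
    have hSbdd : BddAbove S := bddAbove_Icc.mono Set.inter_subset_left
    set a := sSup S with ha_def
    have haS : a ∈ S := hSc.csSup_mem hSne hSbdd
    have hfa : f a = 0 := haS.2
    have hθa : a ≤ θ₀ := haS.1.2
    have hne2 : ∀ x, a < x → x ≤ θ₀ → f x ≠ 0 := by
      intro x h1 h2 hx
      exact absurd (le_csSup hSbdd ⟨⟨haS.1.1.trans h1.le, h2⟩, hx⟩) (not_le.2 h1)
    have hr'pos : ∀ x, a < x → x ≤ θ₀ → 0 < deriv r x := by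
      intro x h1 h2
      rcases (claim1 x (hne2 x h1 h2)).lt_or_gt with hlt | hgt
      · exfalso
        have hmem : (0:ℝ) ∈ Set.Icc (deriv r x) (deriv r θ₀) := ⟨hlt.le, hpos.le⟩
        obtain ⟨y, hy, hy0⟩ := intermediate_value_Icc h2 hrc'.continuousOn hmem
        exact claim1 y (hne2 y (lt_of_lt_of_le h1 hy.1) hy.2) hy0
      · exact hgt
    have hmono : AntitoneOn μ (Set.Icc a θ₀) := by
      apply antitoneOn_of_deriv_nonpos (convex_Icc a θ₀) hμcont.continuousOn
      · intro x _
        exact (hμD x).differentiableAt.differentiableWithinAt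
      · intro x hx
        rw [interior_Icc] at hx
        rw [(hμD x).deriv]
        have h1 := hμr' x
        have h2 := hr'pos x hx.1 hx.2.le
        nlinarith
    have hle : μ θ₀ ≤ μ a := hmono ⟨le_rfl, hθa⟩ ⟨hθa, le_rfl⟩ hθa
    have hμa : μ a = 0 := by simp [hμ_def, hfa]
    have := hμnonneg θ₀ hf0
    linarith

/-- Infinitesimal injectivity of the `Q`-transform: if `c : S¹ → ℝ²` is a smooth
immersion and `h` a smooth vector field along `c` with
`⟨h', c'⟩ c + 2|c'|² h = 0` identically, then `h ≡ 0`. -/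
theorem Q_transform_infinitesimally_injective (c h : ℝ → E2)
    (hc : ContDiff ℝ (⊤ : ℕ∞) c) (hh : ContDiff ℝ (⊤ : ℕ∞) h)
    (hcper : Function.Periodic c (2 * π)) (hhper : Function.Periodic h (2 * π))
    (himm : ∀ θ, deriv c θ ≠ 0)
    (hker : ∀ θ, ⟪deriv h θ, deriv c θ⟫ • c θ + (2 * ‖deriv c θ‖ ^ 2) • h θ = 0) :
    ∀ θ, h θ = 0 := by
  have hcd : Differentiable ℝ c := hc.differentiable (by simp)
  have hhd : Differentiable ℝ h := hh.differentiable (by simp)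
  have hqpos : ∀ θ, (0:ℝ) < ‖deriv c θ‖ ^ 2 := fun θ => pow_pos (norm_pos_iff.2 (himm θ)) 2
  have hRpos : ∀ θ, c θ ≠ 0 → (0:ℝ) < ⟪c θ, c θ⟫ := fun θ h0 => by
    rw [real_inner_self_eq_norm_sq]
    exact pow_pos (norm_pos_iff.2 h0) 2
  have hfD : ∀ θ, HasDerivAt (fun t => (⟪c t, h t⟫:ℝ)) (⟪c θ, deriv h θ⟫ + ⟪deriv c θ, h θ⟫) θ :=
    fun θ => HasDerivAt.inner ℝ (hcd θ).hasDerivAt (hhd θ).hasDerivAt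
  have hrD : ∀ θ, HasDerivAt (fun t => (⟪c t, c t⟫:ℝ)) (2 * ⟪c θ, deriv c θ⟫) θ := by
    intro θ
    have h1 := HasDerivAt.inner ℝ (hcd θ).hasDerivAt (hcd θ).hasDerivAt
    refine h1.congr_deriv ?_
    rw [real_inner_comm (deriv c θ) (c θ)]
    ring
  have hdr : deriv (fun t => (⟪c t, c t⟫:ℝ)) = fun θ => 2 * ⟪c θ, deriv c θ⟫ :=
    funext fun θ => (hrD θ).deriv
  -- kernel consequences
  have eqA : ∀ θ, ⟪deriv h θ, deriv c θ⟫ * ⟪c θ, c θ⟫ + 2 * ‖deriv c θ‖ ^ 2 * ⟪c θ, h θ⟫ = 0 := by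
    intro θ
    have h0 : ⟪(⟪deriv h θ, deriv c θ⟫ • c θ + (2 * ‖deriv c θ‖ ^ 2) • h θ : E2), c θ⟫ = 0 := by
      rw [hker θ]
      exact inner_zero_left _
    rw [inner_add_left, real_inner_smul_left, real_inner_smul_left] at h0
    linear_combination h0 - 2 * ‖deriv c θ‖ ^ 2 * real_inner_comm (c θ) (h θ)
  have eqB : ∀ θ, ⟪deriv h θ, deriv c θ⟫ * ⟪c θ, h θ⟫ + 2 * ‖deriv c θ‖ ^ 2 * ⟪h θ, h θ⟫ = 0 := by
    intro θ
    have h0 : ⟪(⟪deriv h θ, deriv c θ⟫ • c θ + (2 * ‖deriv c θ‖ ^ 2) • h θ : E2), h θ⟫ = 0 := by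
      rw [hker θ]
      exact inner_zero_left _
    rw [inner_add_left, real_inner_smul_left, real_inner_smul_left] at h0
    linarith
  -- Cauchy-Schwarz equality: r ⟨h,h⟩ = f²
  have hRH : ∀ θ, ⟪c θ, c θ⟫ * ⟪h θ, h θ⟫ = ⟪c θ, h θ⟫ ^ 2 := by
    intro θ
    have h1 : 2 * ‖deriv c θ‖ ^ 2 * (⟪c θ, h θ⟫ ^ 2 - ⟪c θ, c θ⟫ * ⟪h θ, h θ⟫) = 0 := by
      linear_combination ⟪c θ, h θ⟫ * eqA θ - ⟪c θ, c θ⟫ * eqB θ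
    rcases mul_eq_zero.1 h1 with h2 | h2
    · exfalso
      linarith [hqpos θ]
    · linarith
  -- global parallelity:  ⟨c,c⟩ • h = ⟨c,h⟩ • c
  have hG : ∀ θ, (⟪c θ, c θ⟫:ℝ) • h θ = (⟪c θ, h θ⟫:ℝ) • c θ := by
    intro θ
    have hz : ⟪(⟪c θ, c θ⟫ • h θ - ⟪c θ, h θ⟫ • c θ : E2),
        (⟪c θ, c θ⟫ • h θ - ⟪c θ, h θ⟫ • c θ : E2)⟫ = 0 := by
      simp only [inner_sub_left, inner_sub_right, real_inner_smul_left, real_inner_smul_right]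
      linear_combination (⟪c θ, c θ⟫:ℝ) * hRH θ
        - (⟪c θ, c θ⟫ * ⟪c θ, h θ⟫) * real_inner_comm (c θ) (h θ)
    exact sub_eq_zero.1 (inner_self_eq_zero.1 hz)
  -- the key scalar identity
  have hK : ∀ θ, ⟪c θ, c θ⟫ * (2 * ⟪c θ, deriv c θ⟫) * deriv (fun t => (⟪c t, h t⟫:ℝ)) θ
      = ⟪c θ, h θ⟫ * ((2 * ⟪c θ, deriv c θ⟫) ^ 2 - 6 * ‖deriv c θ‖ ^ 2 * ⟪c θ, c θ⟫) := by
    intro θ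
    have hs1 : HasDerivAt (fun t => (⟪c t, c t⟫:ℝ) • h t)
        ((⟪c θ, c θ⟫:ℝ) • deriv h θ + (2 * ⟪c θ, deriv c θ⟫) • h θ) θ :=
      (hrD θ).smul (hhd θ).hasDerivAt
    have hs2 : HasDerivAt (fun t => (⟪c t, h t⟫:ℝ) • c t)
        ((⟪c θ, h θ⟫:ℝ) • deriv c θ + (⟪c θ, deriv h θ⟫ + ⟪deriv c θ, h θ⟫) • c θ) θ :=
      (hfD θ).smul (hcd θ).hasDerivAt
    have hueq : (fun t => (⟪c t, c t⟫:ℝ) • h t) = fun t => (⟪c t, h t⟫:ℝ) • c t := funext hG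
    rw [hueq] at hs1
    have hveq := hs1.unique hs2
    have hE1 : ⟪((⟪c θ, c θ⟫:ℝ) • deriv h θ + (2 * ⟪c θ, deriv c θ⟫) • h θ : E2), deriv c θ⟫
        = ⟪((⟪c θ, h θ⟫:ℝ) • deriv c θ + (⟪c θ, deriv h θ⟫ + ⟪deriv c θ, h θ⟫) • c θ : E2),
            deriv c θ⟫ := by rw [hveq]
    simp only [inner_add_left, real_inner_smul_left] at hE1
    have hE2 : ⟪((⟪c θ, c θ⟫:ℝ) • h θ : E2), deriv c θ⟫
        = ⟪((⟪c θ, h θ⟫:ℝ) • c θ : E2), deriv c θ⟫ := by rw [hG θ]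
    simp only [real_inner_smul_left] at hE2
    have hE3 := eqA θ
    have hqe : (⟪deriv c θ, deriv c θ⟫:ℝ) = ‖deriv c θ‖ ^ 2 := real_inner_self_eq_norm_sq _
    rw [hqe] at hE1
    rw [(hfD θ).deriv]
    linear_combination (-2 * ⟪c θ, c θ⟫) * hE1 + (4 * ⟪c θ, deriv c θ⟫) * hE2
      + (2 * ⟪c θ, c θ⟫) * hE3
  -- apply the scalar lemma
  have hfzero : ∀ θ, (⟪c θ, h θ⟫:ℝ) = 0 := by
    apply Qtransform_scalar_zero (fun t => (⟪c t, h t⟫:ℝ)) (fun t => (⟪c t, c t⟫:ℝ))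
      (fun t => ‖deriv c t‖ ^ 2)
    · exact fun θ => (hfD θ).differentiableAt
    · exact fun θ => (hrD θ).differentiableAt
    · rw [hdr]
      exact continuous_const.mul (hc.continuous.inner (hc.continuous_deriv (by simp)))
    · intro x
      simp only
      rw [hcper x, hhper x]
    · intro x
      simp only
      rw [hcper x]
    · exact hqpos
    · intro θ hf0
      rcases eq_or_ne (c θ) 0 with h0 | h0
      · exact absurd (by simp [h0]) hf0
      · exact hRpos θ h0
    · intro θ
      simp only [hdr]
      exact hK θ
    · intro θ
      simp only [hdr]
      have hcs := real_inner_mul_inner_self_le (c θ) (deriv c θ)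
      have hqe : (⟪deriv c θ, deriv c θ⟫:ℝ) = ‖deriv c θ‖ ^ 2 := real_inner_self_eq_norm_sq _
      rw [hqe] at hcs
      nlinarith [hcs]
  -- conclude h = 0
  intro θ
  rcases eq_or_ne (c θ) 0 with h0 | h0
  · have hk := hker θ
    rw [h0, smul_zero, zero_add] at hk
    rcases smul_eq_zero.1 hk with h2 | h2
    · exfalso
      linarith [hqpos θ]
    · exact h2
  · have h1 := hRH θ
    rw [hfzero θ] at h1
    have h2 : (⟪h θ, h θ⟫:ℝ) = 0 := by
      have := hRpos θ h0
      have h3 : ⟪c θ, c θ⟫ * ⟪h θ, h θ⟫ = 0 := by linarith [h1]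
      rcases mul_eq_zero.1 h3 with h4 | h4
      · linarith
      · exact h4
    exact inner_self_eq_zero.1 h2
end
end

section
/- Let a, b > 0 with 4b² ≥ a². The pullback of the flat L² inner product on C^∞([0,2π], ℝ³) under the transform R^{a,b}(c) = |c'|^{1/2}(a·v₁, a·v₂, √(4b²−a²)) equals the elastic metric: G^{a,b}_c(h,h) = ∫ a²⟨D_s h, n⟩² + b²⟨D_s h, v⟩² ds, where ds = |c'| dθ. -/
open Real MeasureTheory intervalIntegral Function
open scoped RealInnerProductSpace

noncomputable section

/-- The `R^{a,b}`-transform `R^{a,b}(c) = |c'|^{1/2} (a v₁, a v₂, √(4b²−a²))`. -/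
def Rab (a b : ℝ) (c : ℝ → E2) (θ : ℝ) : E3 :=
  V3 (Real.sqrt ‖deriv c θ‖ * (a * uT c θ 0))
     (Real.sqrt ‖deriv c θ‖ * (a * uT c θ 1))
     (Real.sqrt ‖deriv c θ‖ * Real.sqrt (4 * b ^ 2 - a ^ 2))

lemma V3_eq (x y z : ℝ) : V3 x y z
    = x • EuclideanSpace.single (0:Fin 3) (1:ℝ) + y • EuclideanSpace.single 1 1
      + z • EuclideanSpace.single 2 1 := by
  ext i; fin_cases i <;> simp [V3, EuclideanSpace.single_apply]

lemma hasDerivAt_V3 {x y z : ℝ → ℝ} {x' y' z' t : ℝ}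
    (hx : HasDerivAt x x' t) (hy : HasDerivAt y y' t) (hz : HasDerivAt z z' t) :
    HasDerivAt (fun t => V3 (x t) (y t) (z t)) (V3 x' y' z') t := by
  simp only [V3_eq]
  exact ((hx.smul_const _).add (hy.smul_const _)).add (hz.smul_const _)

lemma norm_V3_sq (x y z : ℝ) : ‖V3 x y z‖ ^ 2 = x ^ 2 + y ^ 2 + z ^ 2 := by
  rw [EuclideanSpace.norm_eq, Real.sq_sqrt (by positivity)]
  simp [V3, Fin.sum_univ_three, sq_abs]

lemma inner_E2 (x y : E2) : ⟪x, y⟫ = x 0 * y 0 + x 1 * y 1 := by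
  simp [PiLp.inner_apply, Fin.sum_univ_two, RCLike.inner_apply]; ring

/-- The pullback of the flat `L²` inner product under `R^{a,b}` is the elastic metric:
`G^{a,b}_c(h,h) = ∫ a²⟨D_s h, n⟩² + b²⟨D_s h, v⟩² ds` with `ds = |c'| dθ`. -/
theorem Rab_pullback_is_elastic_metric (a b : ℝ) (ha : 0 < a) (hb : 0 < b)
    (hab : a ^ 2 ≤ 4 * b ^ 2)
    (c h : ℝ → E2) (hc : ContDiff ℝ (⊤ : ℕ∞) c) (hh : ContDiff ℝ (⊤ : ℕ∞) h)
    (himm : ∀ θ, deriv c θ ≠ 0) :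
    ∫ θ in (0:ℝ)..2 * π,
        ‖deriv (fun t : ℝ => Rab a b (fun s => c s + t • h s) θ) 0‖ ^ 2
      = ∫ θ in (0:ℝ)..2 * π,
          (a ^ 2 * ⟪Ds c h θ, nor c θ⟫ ^ 2 + b ^ 2 * ⟪Ds c h θ, uT c θ⟫ ^ 2)
            * ‖deriv c θ‖ := by
  apply intervalIntegral.integral_congr
  intro θ _
  dsimp only
  have hcd : Differentiable ℝ c := hc.differentiable (by simp)
  have hhd : Differentiable ℝ h := hh.differentiable (by simp)
  set p := deriv c θ with hp
  set q := deriv h θ with hq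
  have hd : ∀ t : ℝ, deriv (fun s => c s + t • h s) θ = p + t • q := by
    intro t
    rw [deriv_fun_add (g := fun s => t • h s) (hcd θ) ((hhd θ).const_smul t), deriv_fun_const_smul t (hhd θ)]
  have h00 : p + (0:ℝ) • q = p := by simp
  have hnp : (0:ℝ) < ‖p‖ := norm_pos_iff.mpr (himm θ)
  have hfun : (fun t : ℝ => Rab a b (fun s => c s + t • h s) θ)
      = fun t => V3 (Real.sqrt ‖p + t • q‖ * (a * (‖p + t • q‖⁻¹ * (p + t • q) 0)))
                   (Real.sqrt ‖p + t • q‖ * (a * (‖p + t • q‖⁻¹ * (p + t • q) 1)))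
                   (Real.sqrt ‖p + t • q‖ * Real.sqrt (4 * b ^ 2 - a ^ 2)) := by
    funext t
    simp only [Rab, uT, hd t, PiLp.smul_apply, smul_eq_mul]
  rw [hfun]
  -- derivative of the moving point
  have hdpt : HasDerivAt (fun t : ℝ => p + t • q) q 0 := by
    simpa using ((hasDerivAt_id (0:ℝ)).smul_const q).const_add p
  have hS : HasDerivAt (fun t : ℝ => ‖p + t • q‖ ^ 2) (2 * ⟪p, q⟫) 0 := by
    simpa [h00] using hdpt.norm_sq
  have hN : HasDerivAt (fun t : ℝ => ‖p + t • q‖) (⟪p, q⟫ / ‖p‖) 0 := by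
    have hg : HasDerivAt Real.sqrt (1 / (2 * Real.sqrt (‖p‖ ^ 2))) (‖p + (0:ℝ) • q‖ ^ 2) := by
      rw [h00]; exact Real.hasDerivAt_sqrt (by positivity)
    have h1 := hg.comp 0 hS
    have h2 : (Real.sqrt ∘ fun t : ℝ => ‖p + t • q‖ ^ 2) = fun t : ℝ => ‖p + t • q‖ := by
      funext t; exact Real.sqrt_sq (norm_nonneg _)
    rw [h2] at h1
    refine h1.congr_deriv ?_
    rw [Real.sqrt_sq hnp.le]
    field_simp
  have hsq : HasDerivAt (fun t : ℝ => Real.sqrt ‖p + t • q‖)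
      (1 / (2 * Real.sqrt ‖p‖) * (⟪p, q⟫ / ‖p‖)) 0 := by
    have hg : HasDerivAt Real.sqrt (1 / (2 * Real.sqrt ‖p‖)) (‖p + (0:ℝ) • q‖) := by
      rw [h00]; exact Real.hasDerivAt_sqrt hnp.ne'
    exact hg.comp 0 hN
  have hinv := hN.fun_inv (show ‖p + (0:ℝ) • q‖ ≠ 0 by rw [h00]; exact hnp.ne')
  have hd0 : HasDerivAt (fun t : ℝ => (p + t • q) 0) (q 0) 0 := by
    have he : (fun t : ℝ => (p + t • q) 0) = fun t => p 0 + t * q 0 := by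
      funext t; simp
    rw [he]
    simpa using ((hasDerivAt_id (0:ℝ)).mul_const (q 0)).const_add (p 0)
  have hd1 : HasDerivAt (fun t : ℝ => (p + t • q) 1) (q 1) 0 := by
    have he : (fun t : ℝ => (p + t • q) 1) = fun t => p 1 + t * q 1 := by
      funext t; simp
    rw [he]
    simpa using ((hasDerivAt_id (0:ℝ)).mul_const (q 1)).const_add (p 1)
  have hx0 := hsq.fun_mul (HasDerivAt.const_mul a (hinv.fun_mul hd0))
  have hx1 := hsq.fun_mul (HasDerivAt.const_mul a (hinv.fun_mul hd1))
  have hz := hsq.mul_const (Real.sqrt (4 * b ^ 2 - a ^ 2))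
  have hL := hasDerivAt_V3 hx0 hx1 hz
  rw [hL.deriv, norm_V3_sq]
  simp only [Ds, nor, uT, rot, ← hp, ← hq, h00, inner_E2]
  simp only [V2, WithLp.equiv_symm_apply, PiLp.toLp_apply, Matrix.cons_val_zero, Matrix.cons_val_one,
    Matrix.head_cons, PiLp.smul_apply, smul_eq_mul]
  have hs2 : Real.sqrt ‖p‖ ^ 2 = ‖p‖ := Real.sq_sqrt hnp.le
  have hK2 : Real.sqrt (4 * b ^ 2 - a ^ 2) ^ 2 = 4 * b ^ 2 - a ^ 2 :=
    Real.sq_sqrt (by linarith)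
  have hn2 : ‖p‖ ^ 2 = p 0 ^ 2 + p 1 ^ 2 := by
    rw [EuclideanSpace.norm_eq, Real.sq_sqrt (by positivity)]
    simp [Fin.sum_univ_two, sq_abs]
  have hsne : Real.sqrt ‖p‖ ≠ 0 := by positivity
  rw [← hs2] at hn2 ⊢
  set s := Real.sqrt ‖p‖ with hsdef
  set K := Real.sqrt (4 * b ^ 2 - a ^ 2) with hKdef
  set P0 := p 0; set P1 := p 1; set Q0 := q 0; set Q1 := q 1
  have hs0 : (0:ℝ) ≤ s := Real.sqrt_nonneg _
  rw [Real.sqrt_sq hs0]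
  field_simp
  linear_combination (a^2*(4*s^4*(Q0^2+Q1^2) - (P0*Q0+P1*Q1)^2)) * hn2
    + (s^4*(P0*Q0+P1*Q1)^2) * hK2
end
end
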